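/- arXiv:2505.10423 — 2 statements merged into one kernel-verified Lean document; each statement's English description precedes it below -/
import Mathlib

section
/- Let X be a finite nonempty set and F a finite class of functions X → {−1,1}, regarded as a sign matrix A : F × X → {−1,1} with A(f,x) = f(x). Then for every product probability distribution ζ = μ ⊗ ρ on F × X there exist subsets B ⊆ F, C ⊆ X and a function g : {0,1} × {0,1} → [−1,1] such that | E_{(f,x)∼ζ}[ g(1_B(f), 1_C(x)) · f(x) ] | ≥ 1 / (8 · sq(F)²). -/
open MeasureTheory Finset

attribute [local instance] Classical.propDecidable

/-- `ρ` is a probability distribution on the finite type `X`. -/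
def IsDist {X : Type} [Fintype X] (ρ : X → ℝ) : Prop :=
  (∀ x, 0 ≤ ρ x) ∧ ∑ x, ρ x = 1

/-- `μ` is a probability distribution supported on the finite class `F`. -/
def IsDistOn {X : Type} [Fintype X] (F : Finset (X → ℝ)) (μ : (X → ℝ) → ℝ) : Prop :=
  (∀ f, 0 ≤ μ f) ∧ (∀ f ∉ F, μ f = 0) ∧ ∑ f ∈ F, μ f = 1

/-- The statistical query dimension of a finite class `F` of `±1`-valued functions. -/
noncomputable def sqDim {X : Type} [Fintype X] (F : Finset (X → ℝ)) : ℕ :=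
  sSup {d : ℕ | ∃ ρ : X → ℝ, IsDist ρ ∧ ∃ g : Fin d → (X → ℝ),
    Function.Injective g ∧ (∀ i, g i ∈ F) ∧
    ∀ i j, i ≠ j → |∑ x, ρ x * (g i x * g j x)| ≤ 1 / (d : ℝ)}

/-
Let `d = sq(F)` and `⟨f, h⟩_ρ = E_{x∼ρ}[f(x) h(x)]`. Take a maximal `T ⊆ F` whose members pairwise
satisfy `|⟨f, h⟩_ρ| ≤ 1/(d+1)`. By the definition of `sq`, `|T| ≤ d`, and by maximality every
`f ∈ F` has `|⟨f, h⟩_ρ| > 1/(d+1)` for some `h ∈ T`. Averaging over `T`, one `h ∈ T` satisfies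
`E_{f∼μ} |⟨f, h⟩_ρ| ≥ 1/(d(d+1)) ≥ 1/(8d²)`. Alice sends the sign of `⟨f, h⟩_ρ`, Bob the value
`h(x)`, and the output is their product, whose correlation with `f(x)` is exactly that average.
-/

theorem Finset.exists_pairwise_subset_dominating {α : Type*} {r : α → α → Prop}
    (hr : ∀ a b, r a b → r b a) (F : Finset α) :
    ∃ T ⊆ F, (T : Set α).Pairwise r ∧ ∀ f ∈ F, f ∈ T ∨ ∃ h ∈ T, ¬ r f h := by
  obtain ⟨T, hT, hmax⟩ :=
    (F.powerset.filter fun T : Finset α => (T : Set α).Pairwise r).exists_maximal ⟨∅, by simp⟩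
  rw [mem_filter, mem_powerset] at hT
  refine ⟨T, hT.1, hT.2, fun f hf => or_iff_not_imp_right.2 fun hfar => ?_⟩
  simp only [not_exists, not_and, not_not] at hfar
  have hins : insert f T ∈ F.powerset.filter fun T : Finset α => (T : Set α).Pairwise r := by
    rw [mem_filter, mem_powerset, coe_insert]
    exact ⟨insert_subset hf hT.1, hT.2.insert fun h hh _ => ⟨hfar h hh, hr _ _ (hfar h hh)⟩⟩
  exact hmax hins (subset_insert f T) (mem_insert_self f T)

def corr {X : Type} [Fintype X] (ρ : X → ℝ) (f g : X → ℝ) : ℝ :=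
  ∑ x, ρ x * (f x * g x)

section Correlation

variable {X : Type} [Fintype X] {ρ : X → ℝ}

theorem corr_comm (f g : X → ℝ) : corr ρ f g = corr ρ g f := by
  simp only [corr, mul_comm (f _)]

theorem corr_self_of_sign (hρ : IsDist ρ) {f : X → ℝ} (hf : ∀ x, f x = 1 ∨ f x = -1) :
    corr ρ f f = 1 := by
  have hff : ∀ x, f x * f x = 1 := fun x => by rcases hf x with h | h <;> norm_num [h]
  simp only [corr, hff, mul_one, hρ.2]

end Correlation

section SqDim

variable {X : Type} [Fintype X] {F : Finset (X → ℝ)} {ρ : X → ℝ}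

theorem card_le_sqDim (hρ : IsDist ρ) {T : Finset (X → ℝ)} (hTF : T ⊆ F)
    (hT : (T : Set (X → ℝ)).Pairwise fun f g => |corr ρ f g| ≤ 1 / #T) :
    #T ≤ sqDim F := by
  refine le_csSup ⟨#F, ?_⟩ ⟨ρ, hρ, fun i => T.equivFin.symm i, ?_, ?_, ?_⟩
  · rintro n ⟨-, -, g, hg, hgF, -⟩
    simpa using Fintype.card_le_of_injective (fun i => (⟨g i, hgF i⟩ : F))
      fun i j hij => hg (congrArg Subtype.val hij)
  · exact Subtype.val_injective.comp T.equivFin.symm.injective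
  · exact fun i => hTF (T.equivFin.symm i).2
  · intro i j hij
    exact hT (T.equivFin.symm i).2 (T.equivFin.symm j).2
      ((Subtype.val_injective.comp T.equivFin.symm.injective).ne hij)

theorem le_sqDim_of_pairwise (hρ : IsDist ρ) {T : Finset (X → ℝ)} (hTF : T ⊆ F) {n : ℕ}
    (hn : n ≤ #T) (hT : (T : Set (X → ℝ)).Pairwise fun f g => |corr ρ f g| ≤ 1 / n) :
    n ≤ sqDim F := by
  obtain ⟨S, hST, rfl⟩ := exists_subset_card_eq hn
  exact card_le_sqDim hρ (hST.trans hTF) (hT.mono (coe_subset.2 hST))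

theorem exists_sqDim_cover (hsign : ∀ f ∈ F, ∀ x, f x = 1 ∨ f x = -1) (hρ : IsDist ρ) :
    ∃ T ⊆ F, #T ≤ sqDim F ∧
      ∀ f ∈ F, ∃ h ∈ T, 1 / ((sqDim F : ℝ) + 1) < |corr ρ f h| := by
  obtain ⟨T, hTF, hT, hcover⟩ := F.exists_pairwise_subset_dominating
    (r := fun f g => |corr ρ f g| ≤ 1 / ((sqDim F : ℝ) + 1)) fun f g h => by rwa [corr_comm]
  refine ⟨T, hTF, Nat.le_of_lt_succ <| lt_of_not_ge fun hlarge => ?_, fun f hf => ?_⟩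
  · have := le_sqDim_of_pairwise hρ hTF hlarge (by push_cast; exact hT)
    omega
  · rcases hcover f hf with hfT | ⟨h, hh, hfar⟩
    · refine ⟨f, hfT, ?_⟩
      rw [corr_self_of_sign hρ (hsign f hf), abs_one]
      have hd : 1 ≤ sqDim F := card_le_sqDim hρ (singleton_subset_iff.2 hf) (by simp)
      rw [div_lt_one (by positivity)]
      exact_mod_cast Nat.lt_succ_of_le hd
    · exact ⟨h, hh, lt_of_not_ge hfar⟩

end SqDim

theorem exists_mem_div_card_le_sum {α β : Type*} {F : Finset α} {T : Finset β} {μ : α → ℝ}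
    (hμ0 : ∀ f, 0 ≤ μ f) (hμ1 : ∑ f ∈ F, μ f = 1) {a : α → β → ℝ} (ha : ∀ f h, 0 ≤ a f h)
    {ε : ℝ} (hcover : ∀ f ∈ F, ∃ h ∈ T, ε ≤ a f h) :
    ∃ h ∈ T, ε / #T ≤ ∑ f ∈ F, μ f * a f h := by
  obtain ⟨f₀, hf₀⟩ := nonempty_of_sum_ne_zero (hμ1.trans_ne one_ne_zero)
  have hT : T.Nonempty := let ⟨h, hh, _⟩ := hcover f₀ hf₀; ⟨h, hh⟩
  refine exists_le_of_sum_le hT ?_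
  calc ∑ _ ∈ T, ε / #T = ε := by
        rw [sum_const, nsmul_eq_mul, mul_div_cancel₀ _ (by exact_mod_cast hT.card_pos.ne')]
    _ = ∑ f ∈ F, μ f * ε := by rw [← sum_mul, hμ1, one_mul]
    _ ≤ ∑ f ∈ F, μ f * ∑ h ∈ T, a f h := by
        refine sum_le_sum fun f hf => mul_le_mul_of_nonneg_left ?_ (hμ0 f)
        obtain ⟨h, hh, hεh⟩ := hcover f hf
        exact hεh.trans (single_le_sum (fun h _ => ha f h) hh)
    _ = ∑ h ∈ T, ∑ f ∈ F, μ f * a f h := by simp only [mul_sum]; exact sum_comm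

theorem two_mul_indicator_sub_one_mul {α : Type*} (c : α → ℝ) (a : α) :
    (2 * Set.indicator {a | 0 ≤ c a} 1 a - 1) * c a = |c a| := by
  simp only [Set.indicator_apply, Set.mem_ofPred_eq, Pi.one_apply]
  split_ifs with ha
  · rw [abs_of_nonneg ha]; ring
  · rw [abs_of_neg (not_le.1 ha)]; ring

theorem two_mul_indicator_sub_one_of_sign {α : Type*} {h : α → ℝ} {a : α}
    (ha : h a = 1 ∨ h a = -1) : 2 * Set.indicator {a | h a = 1} 1 a - 1 = h a := by
  rcases ha with ha | ha <;>
    simp only [Set.indicator_apply, Set.mem_ofPred_eq, Pi.one_apply, ha] <;> norm_num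

theorem sum_sign_protocol_eq_sum_abs_corr {X : Type} [Fintype X] {h : X → ℝ} (hh : ∀ x, h x = 1 ∨ h x = -1)
    (F : Finset (X → ℝ)) (μ : (X → ℝ) → ℝ) (ρ : X → ℝ) :
    ∑ f ∈ F, ∑ x, μ f * ρ x * ((2 * Set.indicator {f | 0 ≤ corr ρ f h} 1 f - 1) *
        (2 * Set.indicator {x | h x = 1} 1 x - 1)) * f x =
      ∑ f ∈ F, μ f * |corr ρ f h| := by
  refine sum_congr rfl fun f _ => ?_
  simp only [two_mul_indicator_sub_one_of_sign (hh _)]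
  rw [← two_mul_indicator_sub_one_mul (corr ρ · h) f, corr, mul_sum, mul_sum]
  exact sum_congr rfl fun x _ => by ring

theorem two_bit_protocol_for_class_general {X : Type} [Fintype X]
    (F : Finset (X → ℝ))
    (hsign : ∀ f ∈ F, ∀ x, f x = 1 ∨ f x = -1)
    (μ : (X → ℝ) → ℝ) (hμ : IsDistOn F μ) (ρ : X → ℝ) (hρ : IsDist ρ) :
    ∃ B : Set (X → ℝ), ∃ C : Set X, ∃ g : ℝ → ℝ → ℝ,
      (∀ s ∈ ({0, 1} : Set ℝ), ∀ t ∈ ({0, 1} : Set ℝ), |g s t| ≤ 1) ∧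
      1 / (8 * (sqDim F : ℝ) ^ 2) ≤
        |∑ f ∈ F, ∑ x : X,
            μ f * ρ x * g (B.indicator 1 f) (C.indicator 1 x) * f x| := by
  obtain ⟨T, hTF, hTcard, hcover⟩ := exists_sqDim_cover hsign hρ
  obtain ⟨h, hhT, hh⟩ := exists_mem_div_card_le_sum hμ.1 hμ.2.2
    (fun f h => abs_nonneg (corr ρ f h)) fun f hf => (hcover f hf).imp fun _ hh => ⟨hh.1, hh.2.le⟩
  refine ⟨{f | 0 ≤ corr ρ f h}, {x | h x = 1}, fun s t => (2 * s - 1) * (2 * t - 1), ?_, ?_⟩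
  · rintro s (rfl | rfl) t (rfl | rfl) <;> norm_num
  beta_reduce
  rw [sum_sign_protocol_eq_sum_abs_corr (hsign h (hTF hhT)),
    abs_of_nonneg (sum_nonneg fun f _ => mul_nonneg (hμ.1 f) (abs_nonneg _))]
  refine le_trans ?_ hh
  have hT : (1 : ℝ) ≤ #T := by exact_mod_cast card_pos.2 ⟨h, hhT⟩
  have hd : (#T : ℝ) ≤ sqDim F := by exact_mod_cast hTcard
  rw [div_div]
  exact one_div_le_one_div_of_le (by positivity) (by nlinarith)

/-- For every product distribution `μ ⊗ ρ` on `F × X` there is a 2-bit protocol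
(membership bits for `B ⊆ F` and `C ⊆ X`, combined by `g : {0,1}² → [−1,1]`) whose
expected output correlates with the evaluation matrix `A(f,x) = f(x)` at least
`1/(8·sq(F)²)`. -/
theorem two_bit_protocol_for_class {X : Type} [Fintype X] [Nonempty X]
    (F : Finset (X → ℝ)) (hF : F.Nonempty)
    (hsign : ∀ f ∈ F, ∀ x, f x = 1 ∨ f x = -1)
    (μ : (X → ℝ) → ℝ) (hμ : IsDistOn F μ) (ρ : X → ℝ) (hρ : IsDist ρ) :
    ∃ B : Set (X → ℝ), ∃ C : Set X, ∃ g : ℝ → ℝ → ℝ,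
      (∀ s ∈ ({0, 1} : Set ℝ), ∀ t ∈ ({0, 1} : Set ℝ), |g s t| ≤ 1) ∧
      1 / (8 * (sqDim F : ℝ) ^ 2) ≤
        |∑ f ∈ F, ∑ x : X,
            μ f * ρ x * g (B.indicator 1 f) (C.indicator 1 x) * f x| :=
  two_bit_protocol_for_class_general F hsign μ hμ ρ hρ
end

section
/- Let R and W be finite nonempty sets and let F : R × W → {−1,1}. Define the 2-party norm R₂(F) = E[ F(r,w)·F(r,w′)·F(r′,w)·F(r′,w′) ], where r, r′ are independent uniform on R and w, w′ are independent uniform on W. Then for every a : R → {0,1}, b : W → {0,1}, and g : {0,1} × {0,1} → [−1,1], | E_{r uniform on R, w uniform on W}[ g(a(r), b(w)) · F(r,w) ] | ≤ 4 · R₂(F)^{1/4}. (In particular, R₂(F) ≥ 0, being equal to E_{w,w′}[(E_r[F(r,w)F(r,w′)])²].) -/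
/-!
Let `c` be the correlation of `F` with a rectangle `u ⊗ v` of weights in `[-1, 1]`, and let
`G r r' = 𝔼 w, F r w F r' w`. Cauchy–Schwarz in `w` removes `v`:
`c² ≤ 𝔼 r r', u r u r' G r r'`; Cauchy–Schwarz in `r`, twice, removes `u`:
`(c²)² ≤ 𝔼 r r', (G r r')² = R₂(F)`.
The output `g (a r) (b w)` of a protocol is a combination, with coefficients in `[-1, 1]`, of the
indicators of the `|S| · |T|` rectangles `a⁻¹ {s} × b⁻¹ {t}`; for two bits there are four.
-/

open MeasureTheory Finset

attribute [local instance] Classical.propDecidable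

/-- The 2-party norm
`R₂(F) = E_{r,r',w,w' uniform}[F(r,w)·F(r,w')·F(r',w)·F(r',w')]`. -/
noncomputable def twoPartyNorm {R W : Type} [Fintype R] [Fintype W]
    (F : R → W → ℝ) : ℝ :=
  (∑ r : R, ∑ r' : R, ∑ w : W, ∑ w' : W,
      F r w * F r w' * F r' w * F r' w') /
    ((Fintype.card R : ℝ) ^ 2 * (Fintype.card W : ℝ) ^ 2)

open scoped BigOperators

theorem Finset.sq_expect_mul_le_expect_sq {ι : Type*} (s : Finset ι) {u : ι → ℝ}
    (hu : ∀ i ∈ s, |u i| ≤ 1) (f : ι → ℝ) :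
    (𝔼 i ∈ s, u i * f i) ^ 2 ≤ 𝔼 i ∈ s, f i ^ 2 := by
  have hu2 : 𝔼 i ∈ s, u i ^ 2 ≤ 1 := by
    rcases s.eq_empty_or_nonempty with rfl | hs
    · simp
    · exact expect_le hs fun i hi => (sq_le_one_iff_abs_le_one _).2 (hu i hi)
  calc (𝔼 i ∈ s, u i * f i) ^ 2 ≤ (𝔼 i ∈ s, u i ^ 2) * 𝔼 i ∈ s, f i ^ 2 :=
        expect_mul_sq_le_sq_mul_sq s u f
    _ ≤ 𝔼 i ∈ s, f i ^ 2 :=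
        mul_le_of_le_one_left (expect_nonneg fun i _ => sq_nonneg _) hu2

section TwoPartyNorm

variable {R W : Type} [Fintype R] [Fintype W]

theorem expect_sq_expect_mul (F : R → W → ℝ) (v : W → ℝ) :
    𝔼 r, (𝔼 w, v w * F r w) ^ 2 = 𝔼 w, v w * 𝔼 w', v w' * 𝔼 r, F r w * F r w' := by
  simp_rw [sq, Fintype.expect_mul_expect, mul_expect]
  rw [expect_comm]
  refine expect_congr rfl fun w _ => ?_
  rw [expect_comm]
  exact expect_congr rfl fun w' _ => expect_congr rfl fun r _ => by ring

theorem twoPartyNorm_eq_expect (F : R → W → ℝ) :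
    twoPartyNorm F = 𝔼 r, 𝔼 r', 𝔼 w, 𝔼 w', F r w * F r w' * F r' w * F r' w' := by
  simp only [twoPartyNorm, Fintype.expect_eq_sum_div_card, ← sum_div, div_div]
  ring

theorem twoPartyNorm_eq_expect_sq (F : R → W → ℝ) :
    twoPartyNorm F = 𝔼 r, 𝔼 r', (𝔼 w, F r w * F r' w) ^ 2 := by
  simp_rw [twoPartyNorm_eq_expect, sq, Fintype.expect_mul_expect]
  exact expect_congr rfl fun r _ => expect_congr rfl fun r' _ => expect_congr rfl fun w _ =>
    expect_congr rfl fun w' _ => by ring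

theorem twoPartyNorm_nonneg (F : R → W → ℝ) : 0 ≤ twoPartyNorm F := by
  rw [twoPartyNorm_eq_expect_sq]
  exact expect_nonneg fun _ _ => expect_nonneg fun _ _ => sq_nonneg _

theorem expect_expect_mul_mul_pow_four_le_twoPartyNorm (F : R → W → ℝ) {u : R → ℝ}
    {v : W → ℝ} (hu : ∀ r, |u r| ≤ 1) (hv : ∀ w, |v w| ≤ 1) :
    (𝔼 r, 𝔼 w, u r * v w * F r w) ^ 4 ≤ twoPartyNorm F := by
  set c := 𝔼 r, 𝔼 w, u r * v w * F r w
  set G : R → R → ℝ := fun r r' => 𝔼 w, F r w * F r' w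
  have hc : c = 𝔼 w, v w * 𝔼 r, u r * F r w := by
    simp_rw [c, mul_expect]
    rw [expect_comm]
    exact expect_congr rfl fun w _ => expect_congr rfl fun r _ => by ring
  have hc2 : c ^ 2 ≤ 𝔼 r, u r * 𝔼 r', u r' * G r r' := by
    rw [hc, ← expect_sq_expect_mul (fun w r => F r w) u]
    exact sq_expect_mul_le_expect_sq univ (fun w _ => hv w) _
  calc c ^ 4 = (c ^ 2) ^ 2 := by ring
    _ ≤ (𝔼 r, u r * 𝔼 r', u r' * G r r') ^ 2 := pow_le_pow_left₀ (sq_nonneg c) hc2 2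
    _ ≤ 𝔼 r, (𝔼 r', u r' * G r r') ^ 2 :=
        sq_expect_mul_le_expect_sq univ (fun r _ => hu r) _
    _ ≤ 𝔼 r, 𝔼 r', G r r' ^ 2 :=
        expect_le_expect fun r _ => sq_expect_mul_le_expect_sq univ (fun r' _ => hu r') _
    _ = twoPartyNorm F := (twoPartyNorm_eq_expect_sq F).symm

theorem abs_expect_expect_mul_mul_le_twoPartyNorm_rpow (F : R → W → ℝ) {u : R → ℝ}
    {v : W → ℝ} (hu : ∀ r, |u r| ≤ 1) (hv : ∀ w, |v w| ≤ 1) :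
    |𝔼 r, 𝔼 w, u r * v w * F r w| ≤ twoPartyNorm F ^ ((1 : ℝ) / 4) := by
  rw [one_div, Real.le_rpow_inv_iff_of_pos (abs_nonneg _) (twoPartyNorm_nonneg F) four_pos]
  norm_cast
  rw [pow_abs, abs_of_nonneg (by positivity)]
  exact expect_expect_mul_mul_pow_four_le_twoPartyNorm F hu hv

theorem abs_expect_expect_mul_le_card_mul_card_mul_twoPartyNorm_rpow {S T : Type*} [Fintype S]
    [Fintype T] (F : R → W → ℝ) (a : R → S) (b : W → T) (g : S → T → ℝ)
    (hg : ∀ s t, |g s t| ≤ 1) :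
    |𝔼 r, 𝔼 w, g (a r) (b w) * F r w| ≤
      Fintype.card S * Fintype.card T * twoPartyNorm F ^ ((1 : ℝ) / 4) := by
  have hdecomp : 𝔼 r, 𝔼 w, g (a r) (b w) * F r w = ∑ s, ∑ t, g s t *
      𝔼 r, 𝔼 w, (if a r = s then 1 else 0) * (if b w = t then 1 else 0) * F r w := by
    simp_rw [mul_expect, ← expect_sum_comm]
    refine expect_congr rfl fun r _ => expect_congr rfl fun w _ => ?_
    simp [ite_mul, sum_ite_eq]
  rw [hdecomp]
  calc |∑ s, ∑ t, g s t * 𝔼 r, 𝔼 w,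
          (if a r = s then 1 else 0) * (if b w = t then 1 else 0) * F r w|
      ≤ ∑ _s : S, ∑ _t : T, twoPartyNorm F ^ ((1 : ℝ) / 4) := by
        refine (abs_sum_le_sum_abs _ _).trans (sum_le_sum fun s _ => ?_)
        refine (abs_sum_le_sum_abs _ _).trans (sum_le_sum fun t _ => ?_)
        rw [abs_mul]
        exact (mul_le_of_le_one_left (abs_nonneg _) (hg s t)).trans
          (abs_expect_expect_mul_mul_le_twoPartyNorm_rpow F
            (fun r => by split_ifs <;> simp) (fun w => by split_ifs <;> simp))
    _ = Fintype.card S * Fintype.card T * twoPartyNorm F ^ ((1 : ℝ) / 4) := by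
        simp only [sum_const, card_univ, nsmul_eq_mul]
        ring

end TwoPartyNorm

theorem two_bit_correlation_le_two_party_norm_general {R W : Type}
    [Fintype R] [Fintype W]
    (F : R → W → ℝ)
    (a : R → Bool) (b : W → Bool) (g : Bool → Bool → ℝ)
    (hg : ∀ s t, |g s t| ≤ 1) :
    |(∑ r : R, ∑ w : W, g (a r) (b w) * F r w) /
        ((Fintype.card R : ℝ) * (Fintype.card W : ℝ))| ≤
      4 * twoPartyNorm F ^ ((1 : ℝ) / 4) := by
  calc |(∑ r : R, ∑ w : W, g (a r) (b w) * F r w) /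
        ((Fintype.card R : ℝ) * (Fintype.card W : ℝ))|
      = |𝔼 r, 𝔼 w, g (a r) (b w) * F r w| := by
        simp only [Fintype.expect_eq_sum_div_card, ← sum_div, div_div, mul_comm]
    _ ≤ Fintype.card Bool * Fintype.card Bool * twoPartyNorm F ^ ((1 : ℝ) / 4) :=
        abs_expect_expect_mul_le_card_mul_card_mul_twoPartyNorm_rpow F a b g hg
    _ = 4 * twoPartyNorm F ^ ((1 : ℝ) / 4) := by norm_num

/-- BNS-type bound, 2-bit instance: the correlation (under the uniform distribution)
of a sign matrix `F` with the expected output `g(a(r), b(w))` of any randomized 2-bit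
simultaneous protocol is at most `4 · R₂(F)^{1/4}`. -/
theorem two_bit_correlation_le_two_party_norm {R W : Type}
    [Fintype R] [Nonempty R] [Fintype W] [Nonempty W]
    (F : R → W → ℝ) (hF : ∀ r w, F r w = 1 ∨ F r w = -1)
    (a : R → Bool) (b : W → Bool) (g : Bool → Bool → ℝ)
    (hg : ∀ s t, |g s t| ≤ 1) :
    |(∑ r : R, ∑ w : W, g (a r) (b w) * F r w) /
        ((Fintype.card R : ℝ) * (Fintype.card W : ℝ))| ≤
      4 * twoPartyNorm F ^ ((1 : ℝ) / 4) :=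
  two_bit_correlation_le_two_party_norm_general F a b g hg
end
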